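/- arXiv:1207.7116 — 2 statements merged into one kernel-verified Lean document; each statement's English description precedes it below -/
import Mathlib

section
/- Define f as follows on strictly increasing lists of natural numbers: f([u_1]) = 1, f([u_1,u_2]) = u_2 − u_1, and f([u_1,u_2,…,u_l]) = (u_2 − u_1)·f([u_2,…,u_l]) + f([u_3,…,u_l]) for l > 2. Then for every strictly increasing list of positive integers starting with j and ending with k, one has f ≥ k − j. -/
/-- The Kleshchev recursion function on lists of integers. -/
def klef : List ℤ → ℤ
  | [] => 0
  | [_] => 1
  | [u₁, u₂] => u₂ - u₁
  | u₁ :: u₂ :: u₃ :: rest => (u₂ - u₁) * klef (u₂ :: u₃ :: rest) + klef (u₃ :: rest)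

theorem add_le_mul_add_one {R : Type*} [CommRing R] [LinearOrder R] [IsStrictOrderedRing R]
    {a b : R} (ha : 1 ≤ a) (hb : 1 ≤ b) : a + b ≤ a * b + 1 := by
  nlinarith [mul_nonneg (sub_nonneg.2 ha) (sub_nonneg.2 hb)]

theorem one_le_klef_cons : ∀ {a : ℤ} {l : List ℤ}, (a :: l).IsChain (· < ·) → 1 ≤ klef (a :: l)
  | _, [], _ => le_rfl
  | a, [b], h => by
    simp only [List.isChain_pair] at h
    simp only [klef]
    omega
  | a, b :: c :: rest, h => by
    obtain ⟨hab, htail⟩ := List.isChain_cons_cons.1 h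
    have hb := one_le_klef_cons htail
    have hc := one_le_klef_cons htail.tail
    simp only [klef]
    nlinarith

theorem getLast_sub_head_le_klef : ∀ {a : ℤ} {l : List ℤ}, (a :: l).IsChain (· < ·) →
    (a :: l).getLast (List.cons_ne_nil a l) - a ≤ klef (a :: l)
  | _, [], _ => by simp [klef]
  | a, [b], _ => by simp [klef]
  | a, b :: c :: rest, h => by
    -- `k - a = (b - a) + (k - b) ≤ x + y ≤ x * y + 1` with `x = b - a`, `y = klef (b :: c :: rest)`
    obtain ⟨hab, htail⟩ := List.isChain_cons_cons.1 h
    have ih := getLast_sub_head_le_klef htail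
    have hc := one_le_klef_cons htail.tail
    have key := add_le_mul_add_one (by omega : 1 ≤ b - a) (one_le_klef_cons htail)
    rw [List.getLast_cons_cons]
    simp only [klef]
    linarith

theorem stmt2_general (l : List ℤ) (hmono : l.Chain' (· < ·))
    (j k : ℤ) (hj : l.head? = some j) (hk : l.getLast? = some k) :
    k - j ≤ klef l := by
  obtain _ | ⟨a, t⟩ := l
  · simp at hj
  obtain rfl : a = j := by simpa using hj
  obtain rfl : (a :: t).getLast (List.cons_ne_nil a t) = k := by
    simpa [List.getLast?_eq_some_getLast] using hk
  exact getLast_sub_head_le_klef hmono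

/-- For every strictly increasing list of positive integers starting with `j` and
ending with `k`, one has `f ≥ k - j`. -/
theorem stmt2 (l : List ℤ) (hne : l ≠ []) (hmono : l.Chain' (· < ·))
    (hpos : ∀ x ∈ l, 0 < x) (j k : ℤ) (hj : l.head? = some j) (hk : l.getLast? = some k) :
    k - j ≤ klef l :=
  stmt2_general l hmono j k hj hk
end

section
/- Let p ≥ 2 and let c = Σ_{k=0}^{u} c_k p^k be the base-p expansion of a natural number c (so 0 ≤ c_k < p). Suppose c_{j+1} = 0 for some j with j + 1 ≤ u. If c ≥ p^{j+2} is written as a sum c = a_1 + ⋯ + a_i with each 0 ≤ a_k < p^{j+1}, and s is minimal with a_1 + ⋯ + a_s > Σ_{k=0}^{j} c_k p^k, then setting Σ_s = a_1 + ⋯ + a_s one has Σ_s < Σ_{k=0}^{j} c_k p^k + p^{j+1}, s < i, and the (j+1)-st base-p digit of c − Σ_s equals p − 1. -/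
/-- Let `p ≥ 2`, let `c = a₁ + ⋯ + a_i` with each `0 ≤ a_k < p^{j+1}`, suppose the
`(j+1)`-st base-`p` digit of `c` is `0` and `c ≥ p^{j+2}`. If `s` is minimal with
`a₁ + ⋯ + a_s > c mod p^{j+1}` (the latter being `Σ_{k=0}^{j} c_k p^k`), then,
writing `Σ_s = a₁ + ⋯ + a_s`, one has `Σ_s < (c mod p^{j+1}) + p^{j+1}`, `s < i`,
and the `(j+1)`-st base-`p` digit of `c − Σ_s` equals `p − 1`. -/
theorem stmt15 (p j i s : ℕ) (a : ℕ → ℕ) (c : ℕ) (hp : 2 ≤ p) (hi : 1 ≤ i)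
    (ha : ∀ k ∈ Finset.Icc 1 i, a k < p ^ (j + 1))
    (hc : c = ∑ k ∈ Finset.Icc 1 i, a k)
    (hdigit : c / p ^ (j + 1) % p = 0)
    (hbig : p ^ (j + 2) ≤ c)
    (hs1 : 1 ≤ s) (hsi : s ≤ i)
    (hgt : c % p ^ (j + 1) < ∑ k ∈ Finset.Icc 1 s, a k)
    (hmin : ∀ s' < s, (∑ k ∈ Finset.Icc 1 s', a k) ≤ c % p ^ (j + 1)) :
    (∑ k ∈ Finset.Icc 1 s, a k) < c % p ^ (j + 1) + p ^ (j + 1) ∧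
    s < i ∧
    (c - ∑ k ∈ Finset.Icc 1 s, a k) / p ^ (j + 1) % p = p - 1 := by
  set q := p ^ (j + 1) with hq
  set S := ∑ k ∈ Finset.Icc 1 s, a k with hS
  set r := c % q with hr
  have hq0 : 0 < q := pow_pos (by omega) _
  -- split off last term
  have hsplit : S = (∑ k ∈ Finset.Icc 1 (s - 1), a k) + a s := by
    have : s = (s - 1) + 1 := by omega
    rw [hS, this, Finset.sum_Icc_succ_top (by omega)]
    simp
  have has : a s < q := ha s (Finset.mem_Icc.mpr ⟨hs1, hsi⟩)
  have hprev : (∑ k ∈ Finset.Icc 1 (s - 1), a k) ≤ r := hmin _ (by omega)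
  have h1 : S < r + q := by omega
  -- c = q * m + r with m % p = 0
  have hm : c = q * (c / q) + r := (Nat.div_add_mod c q).symm
  set m := c / q with hmdef
  have hmp : p ≤ m := by
    have hqp : p ^ (j + 2) = q * p := by rw [hq]; ring
    exact (Nat.le_div_iff_mul_le hq0).mpr (by rw [mul_comm]; omega)
  have hcS : S < c := by
    have : q + r ≤ q * m + r := by
      have : q * 1 ≤ q * m := Nat.mul_le_mul_left q (by omega)
      omega
    omega
  have h2 : s < i := by
    rcases lt_or_eq_of_le hsi with h | h
    · exact h
    · exfalso; subst h; omega
  refine ⟨h1, h2, ?_⟩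
  -- c - S = q * (m - 1) + t with 0 < t < q
  have hrS : r < S := hgt
  have ht : c - S = q * (m - 1) + (q + r - S) := by
    have hm1 : m = (m - 1) + 1 := by omega
    have : q * m = q * (m - 1) + q := by rw [← Nat.mul_succ]; congr 1 <;> omega
    omega
  have hdiv : (c - S) / q = m - 1 := by
    rw [ht, Nat.mul_add_div hq0]
    have : (q + r - S) / q = 0 := Nat.div_eq_of_lt (by omega)
    omega
  rw [hdiv]
  -- m % p = 0, m ≥ p ⇒ (m - 1) % p = p - 1
  have hu : m = p * (m / p) := (Nat.mul_div_cancel' (Nat.dvd_of_mod_eq_zero hdigit)).symm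
  have hup : 1 ≤ m / p := Nat.one_le_div_iff (by omega) |>.mpr (by omega)
  have : m - 1 = p * (m / p - 1) + (p - 1) := by
    have : p * (m / p) = p * (m / p - 1) + p := by
      rw [← Nat.mul_succ]; congr 1 <;> omega
    omega
  rw [this, Nat.mul_add_mod]
  exact Nat.mod_eq_of_lt (by omega)
end
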